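/- The recursively defined expected waiting times \tilde{w}_k(n) are strictly increasing in n for each fixed k: \tilde{w}_k(n+1) > \tilde{w}_k(n) for all n \geq 0 and all k = 0, \ldots, M. -/

import Mathlib

open Real Finset

/-! The closed form `𝓔(s; n) = n/μ · P(Poisson(μs) > n)` (integrate the Erlang density against `x`
and telescope the derivatives of the Poisson terms) turns the recursion for `w̃_k(n+1) - w̃_k(n)`
into `1/μ + Pois(t_k; n) · (w̃_{k+1}(2) - 1/μ)` plus a nonnegative combination of the increments
of `w̃_{k+1}` minus `1/μ`. Hence the invariant `w̃_k(0) = 0`, `w̃_k(n+1) ≥ w̃_k(n) + 1/μ`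
propagates backwards from `w̃_M(n) = n/μ`. -/

-- Mathlib's `poissonPMFReal` takes its parameter in `ℝ≥0`, which gets in the way of
-- differentiating in it.
noncomputable def poissonTerm (r : ℝ) (i : ℕ) : ℝ := exp (-r) * r ^ i / i.factorial

lemma poissonTerm_nonneg {r : ℝ} (hr : 0 ≤ r) (i : ℕ) : 0 ≤ poissonTerm r i := by
  unfold poissonTerm; positivity

lemma succ_mul_poissonTerm_succ (r : ℝ) (n : ℕ) :
    (n + 1) * poissonTerm r (n + 1) = r * poissonTerm r n := by
  unfold poissonTerm
  rw [Nat.factorial_succ, pow_succ]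
  push_cast
  field_simp

lemma sum_range_succ_poissonTerm_zero (n : ℕ) : ∑ i ∈ range (n + 1), poissonTerm 0 i = 1 := by
  rw [sum_range_succ']
  simp [poissonTerm]

lemma hasDerivAt_poissonTerm_succ (r : ℝ) (n : ℕ) :
    HasDerivAt (poissonTerm · (n + 1)) (poissonTerm r n - poissonTerm r (n + 1)) r := by
  have h := (((hasDerivAt_neg r).exp).mul (hasDerivAt_pow (n + 1) r)).div_const
    ((n + 1).factorial : ℝ)
  refine h.congr_deriv ?_
  unfold poissonTerm
  rw [Nat.factorial_succ]
  push_cast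
  field_simp
  ring

lemma hasDerivAt_sum_poissonTerm (r : ℝ) (n : ℕ) :
    HasDerivAt (fun r ↦ ∑ i ∈ range (n + 1), poissonTerm r i) (-poissonTerm r n) r := by
  induction n with
  | zero => simpa [poissonTerm] using (hasDerivAt_neg r).exp
  | succ n ih =>
    simp only [sum_range_succ _ (n + 1)]
    exact (ih.fun_add (hasDerivAt_poissonTerm_succ r n)).congr_deriv (by ring)

lemma integral_id_mul_erlang {μ : ℝ} (hμ : μ ≠ 0) (n : ℕ) (s : ℝ) :
    ∫ x in (0 : ℝ)..s, x * (μ ^ (n + 1) * x ^ n * exp (-μ * x) / n.factorial) =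
      (n + 1) / μ * (1 - ∑ i ∈ range (n + 2), poissonTerm (μ * s) i) := by
  have hderiv : ∀ x ∈ Set.uIcc 0 s, HasDerivAt
      (fun y ↦ -((n + 1) / μ) * ∑ i ∈ range (n + 2), poissonTerm (μ * y) i)
      (x * (μ ^ (n + 1) * x ^ n * exp (-μ * x) / n.factorial)) x := by
    intro x _
    have h := ((hasDerivAt_sum_poissonTerm (μ * x) (n + 1)).comp x
      ((hasDerivAt_id x).const_mul μ)).const_mul (-((n + 1) / μ))
    refine h.congr_deriv ?_
    unfold poissonTerm
    rw [Nat.factorial_succ]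
    push_cast
    field_simp
    ring
  rw [intervalIntegral.integral_eq_sub_of_hasDerivAt hderiv
    (Continuous.intervalIntegrable (by fun_prop) _ _), mul_zero,
    sum_range_succ_poissonTerm_zero]
  ring

/-- The right-hand side of the recursion for `w̃_k`, with `𝓔(s; n)` in closed form. -/
noncomputable def backwardStep (μ s : ℝ) (v : ℕ → ℝ) (n : ℕ) : ℝ :=
  n / μ * (1 - ∑ i ∈ range (n + 1), poissonTerm (μ * s) i) +
    ∑ i ∈ range n, poissonTerm (μ * s) i * (s + v (n - i + 1))

lemma backwardStep_zero (μ s : ℝ) (v : ℕ → ℝ) : backwardStep μ s v 0 = 0 := by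
  simp [backwardStep]

lemma backwardStep_add_inv_le {μ s : ℝ} {v : ℕ → ℝ} (hμ : 0 < μ) (hs : 0 ≤ s)
    (hv₀ : 0 ≤ v 0) (hv : ∀ n, v n + μ⁻¹ ≤ v (n + 1)) (n : ℕ) :
    backwardStep μ s v n + μ⁻¹ ≤ backwardStep μ s v (n + 1) := by
  unfold backwardStep
  set p := poissonTerm (μ * s)
  have hp : ∀ i, 0 ≤ p i := poissonTerm_nonneg (by positivity)
  have hv₂ : μ⁻¹ ≤ v 2 := by linarith [hv 0, hv 1, inv_pos.2 hμ]
  have hsum : ∑ i ∈ range n, p i * (s + v (n - i + 1)) + μ⁻¹ * ∑ i ∈ range n, p i ≤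
      ∑ i ∈ range n, p i * (s + v (n + 1 - i + 1)) := by
    rw [mul_sum, ← sum_add_distrib]
    refine sum_le_sum fun i _ ↦ ?_
    rw [show n + 1 - i + 1 = n - i + 1 + 1 by grind]
    nlinarith [hp i, hv (n - i + 1)]
  have hclosed_succ : ((n : ℝ) + 1) / μ * (1 - ∑ i ∈ range (n + 1 + 1), p i) -
      n / μ * (1 - ∑ i ∈ range (n + 1), p i) = (1 - ∑ i ∈ range n, p i - p n) / μ - s * p n := by
    have hrec : (n + 1) / μ * p (n + 1) = s * p n := by
      rw [div_mul_eq_mul_div, succ_mul_poissonTerm_succ]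
      field_simp
      rfl
    rw [sum_range_succ p (n + 1), sum_range_succ p n]
    linear_combination -hrec
  have hlast : p n * μ⁻¹ ≤ p n * v 2 := mul_le_mul_of_nonneg_left hv₂ (hp n)
  rw [sum_range_succ (fun i ↦ p i * (s + v (n + 1 - i + 1))) n,
    show n + 1 - n + 1 = 2 by omega]
  push_cast
  linear_combination hsum + hlast - hclosed_succ

/-- The backward waiting-time recursion with terminal condition `w̃_M(n) = n/μ`
is strictly increasing in `n` for each fixed `k`: `w̃_k(n+1) > w̃_k(n)`. -/
theorem wtilde_strictMono (μ : ℝ) (hμ : 0 < μ) (M : ℕ) (t : ℕ → ℝ) (ht : ∀ k, 0 ≤ t k)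
    (Pois : ℝ → ℕ → ℝ)
    (hPois : ∀ s i, Pois s i = Real.exp (-μ * s) * (μ * s) ^ i / (Nat.factorial i))
    (E : ℝ → ℕ → ℝ)
    (hE0 : ∀ s, E s 0 = 0)
    (hE : ∀ s n, 1 ≤ n → E s n = ∫ x in (0:ℝ)..s,
      x * (μ ^ n * x ^ (n - 1) * Real.exp (-μ * x) / (Nat.factorial (n - 1))))
    (w : ℕ → ℕ → ℝ)
    (hwM : ∀ n, w M n = (n : ℝ) / μ)
    (hwk : ∀ k, k < M → ∀ n, w k n =
      E (t k) n + ∑ i ∈ Finset.range n, Pois (t k) i * (t k + w (k + 1) (n - i + 1))) :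
    ∀ k ≤ M, ∀ n : ℕ, w k n < w k (n + 1) := by
  have hPois' : ∀ s, Pois s = poissonTerm (μ * s) := fun s ↦ funext fun i ↦ by
    rw [hPois, poissonTerm, neg_mul]
  have hE' : ∀ s n, E s n = n / μ * (1 - ∑ i ∈ range (n + 1), poissonTerm (μ * s) i)
    | s, 0 => by simp [hE0]
    | s, n + 1 => by
      rw [hE s (n + 1) n.succ_pos, Nat.add_sub_cancel, integral_id_mul_erlang hμ.ne']
      push_cast
      rfl
  have hstep : ∀ k < M, w k = backwardStep μ (t k) (w (k + 1)) := fun k hk ↦ funext fun n ↦ by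
    rw [hwk k hk, hE', hPois', backwardStep]
  have hinc : ∀ k ≤ M, w k 0 = 0 ∧ ∀ n, w k n + μ⁻¹ ≤ w k (n + 1) := by
    intro k hk
    induction hk using Nat.decreasingInduction with
    | self => exact ⟨by simp [hwM], fun n ↦ le_of_eq (by rw [hwM, hwM]; push_cast; ring)⟩
    | of_succ k hk ih =>
      rw [hstep k hk]
      exact ⟨backwardStep_zero .., backwardStep_add_inv_le hμ (ht k) ih.1.ge ih.2⟩
  intro k hk n
  linarith [(hinc k hk).2 n, inv_pos.2 hμ]
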